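/- Let R consist entirely of single cells, so that CLR(λ;R) = ST(λ), the set of standard tableaux of shape λ, and let (ν,J) ∈ RC(λ^t;R^t) with δ̃(ν,J) = (ν̃,J̃), where δ̃ is the colabel version of the box-removal algorithm (select strings of label zero with weakly increasing minimal lengths ℓ̃^{(k)} starting from ℓ̃^{(0)} = 1, shorten each by one keeping label zero, and change all other labels so their colabels are preserved). Then cc(ν,J) − cc(ν̃,J̃) = α^{(1)}_1, the number of parts of ν^{(1)} (equivalently, the size of the first column of ν^{(1)}). -/
import Mathlib


namespace KSS

/-- A rectangle: `(η, μ)` = (width, height). -/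
abbrev Rect := ℕ × ℕ

/-- Total number of cells of a sequence of rectangles. -/
def sizeR (R : List Rect) : ℕ := (R.map (fun r => r.1 * r.2)).sum

/-- `Q_n(ρ)`: number of cells of the partition `ρ` (a multiset of parts) in the
first `n` columns. -/
def Qn (n : ℕ) (ρ : Multiset ℕ) : ℕ := (ρ.map (fun p => min p n)).sum

/-- `m_n(ρ)`: multiplicity of the part `n` in `ρ`. -/
def mpart (n : ℕ) (ρ : Multiset ℕ) : ℕ := ρ.count n

/-- `ξ^{(k)}(R)`: the partition whose parts are the heights of the rectangles of
`R` of width `k`. -/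
def xiR (R : List Rect) (k : ℕ) : Multiset ℕ :=
  ((R.filter (fun r => r.1 == k)).map Prod.snd : List ℕ)

/-- The vacancy numbers `P^{(k)}_n(ν)` for a configuration `ν` relative to the
rectangle data `R` (convention `ν 0 = ∅`). -/
def vacZ (R : List Rect) (ν : ℕ → Multiset ℕ) (k n : ℕ) : ℤ :=
  (Qn n (ν (k-1)) : ℤ) - 2 * (Qn n (ν k) : ℤ) + (Qn n (ν (k+1)) : ℤ) + (Qn n (xiR R k) : ℤ)

/-- The vacancy number as a natural number. -/
def natVac (R : List Rect) (ν : ℕ → Multiset ℕ) (k n : ℕ) : ℕ := (vacZ R ν k n).toNat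

/-- `Σ_{j>k} λ^t_j = Σ_{p ∈ λ} max(p-k,0)` for a partition `λ` (multiset of parts). -/
def sumTail (lam : Multiset ℕ) (k : ℕ) : ℕ := (lam.map (fun p => p - k)).sum

/-- `λ^t_k`: number of parts of `λ` of size at least `k`. -/
def lamT (lam : Multiset ℕ) (k : ℕ) : ℕ := (lam.filter (fun p => k ≤ p)).card

/-- `ν` is a `(λ^t; R^t)`-configuration:
`|ν^{(k)}| = Σ_{j>k} λ^t_j − Σ_a μ_a max(η_a − k, 0)` for all `k ≥ 1`. -/
def IsConfig (lam : Multiset ℕ) (R : List Rect) (ν : ℕ → Multiset ℕ) : Prop :=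
  ν 0 = 0 ∧ (∀ k, 0 ∉ ν k) ∧
  ∀ k, 1 ≤ k → (ν k).sum + (R.map (fun r => r.2 * (r.1 - k))).sum = sumTail lam k

/-- Admissibility: all vacancy numbers are nonnegative. -/
def Admissible (R : List Rect) (ν : ℕ → Multiset ℕ) : Prop :=
  ∀ k n, 1 ≤ k → 1 ≤ n → 0 ≤ vacZ R ν k n

/-- `J` is a rigging of `ν` relative to `R`: for each `k, n ≥ 1`, `J k n` is the
multiset of labels of the strings of length `n` in the `k`-th rigged partition;
there are `m_n(ν^{(k)})` of them, each between `0` and `P^{(k)}_n(ν)`. -/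
def IsRigging (R : List Rect) (ν : ℕ → Multiset ℕ) (J : ℕ → ℕ → Multiset ℕ) : Prop :=
  (∀ k n, (k = 0 ∨ n = 0) → J k n = 0) ∧
  (∀ k n, 1 ≤ k → 1 ≤ n →
    (J k n).card = mpart n (ν k) ∧ ∀ x ∈ J k n, (x : ℤ) ≤ vacZ R ν k n)

/-- Rigged configuration. -/
def IsRC (lam : Multiset ℕ) (R : List Rect) (ν : ℕ → Multiset ℕ)
    (J : ℕ → ℕ → Multiset ℕ) : Prop :=
  IsConfig lam R ν ∧ Admissible R ν ∧ IsRigging R ν J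

/-- The set `RC(λ^t; R^t)` of rigged configurations. -/
def RCset (lam : Multiset ℕ) (R : List Rect) :
    Set ((ℕ → Multiset ℕ) × (ℕ → ℕ → Multiset ℕ)) :=
  {p | IsRC lam R p.1 p.2}

/-- `α^{(k)}_n`: size of the `n`-th column of `ν^{(k)}`. -/
def alphaC (ν : ℕ → Multiset ℕ) (k n : ℕ) : ℕ := ((ν k).filter (fun p => n ≤ p)).card

/-- `cc(ν) = Σ_{k,n ≥ 1} α^{(k)}_n (α^{(k)}_n − α^{(k+1)}_n)`. -/
noncomputable def ccConf (ν : ℕ → Multiset ℕ) : ℤ :=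
  ∑ᶠ k : ℕ, ∑ᶠ n : ℕ,
    (if 1 ≤ k ∧ 1 ≤ n then
      (alphaC ν k n : ℤ) * ((alphaC ν k n : ℤ) - (alphaC ν (k+1) n : ℤ)) else 0)

/-- `cc(ν,J) = cc(ν) + Σ_{k,n ≥ 1} |J^{(k)}_n|`. -/
noncomputable def ccRC (ν : ℕ → Multiset ℕ) (J : ℕ → ℕ → Multiset ℕ) : ℤ :=
  ccConf ν + ∑ᶠ k : ℕ, ∑ᶠ n : ℕ, ((J k n).sum : ℤ)

/-- There is a singular string of length `n` in the `k`-th rigged partition. -/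
def Singular (R : List Rect) (ν : ℕ → Multiset ℕ) (J : ℕ → ℕ → Multiset ℕ)
    (k n : ℕ) : Prop :=
  1 ≤ n ∧ natVac R ν k n ∈ J k n
open scoped Classical in
/-- The lengths `ℓ̃^{(k)}` of the label-zero strings selected by `δ̃` (single
box case, so `ℓ̃^{(0)} = μ_1 = 1`). -/
noncomputable def ellTil (J : ℕ → ℕ → Multiset ℕ) : ℕ → ℕ∞
  | 0 => 1
  | k+1 => sInf {m : ℕ∞ | ∃ n : ℕ, m = (n : ℕ∞) ∧
      ellTil J k ≤ (n : ℕ∞) ∧ 1 ≤ n ∧ (0 : ℕ) ∈ J (k+1) n}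

open scoped Classical in
/-- The configuration of `δ̃(ν,J)`: the selected strings are shortened by one. -/
noncomputable def dtNu (ν : ℕ → Multiset ℕ) (J : ℕ → ℕ → Multiset ℕ) :
    ℕ → Multiset ℕ := fun k =>
  if k = 0 then ν k
  else if ellTil J k = ⊤ then ν k
  else
    let n := (ellTil J k).toNat
    ((ν k).erase n) + (if n ≤ 1 then 0 else {n - 1})

open scoped Classical in
/-- The rigging of `δ̃(ν,J)`: the selected strings keep label `0`, and the
labels of all other strings are changed so that their colabels are preserved. -/
noncomputable def dtJ (R Rt : List Rect) (ν : ℕ → Multiset ℕ)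
    (J : ℕ → ℕ → Multiset ℕ) : ℕ → ℕ → Multiset ℕ := fun k n =>
  if k = 0 ∨ n = 0 then J k n
  else
    let base : Multiset ℕ := if ellTil J k = (n : ℕ∞) then (J k n).erase 0 else J k n
    let adj : Multiset ℕ :=
      base.map (fun x => ((x : ℤ) + vacZ Rt (dtNu ν J) k n - vacZ R ν k n).toNat)
    adj + (if ellTil J k = ((n+1 : ℕ) : ℕ∞) then ({0} : Multiset ℕ) else 0)

/-! ### Auxiliary general lemmas -/

lemma sum_map_toNat_shift (s : Multiset ℕ) (c : ℤ) (h : ∀ x ∈ s, 0 ≤ (x : ℤ) + c) :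
    ((s.map (fun x : ℕ => ((x : ℤ) + c).toNat)).sum : ℤ) = (s.sum : ℤ) + c * s.card := by
  induction s using Multiset.induction with
  | empty => simp
  | cons a s ih =>
    have ha := h a (Multiset.mem_cons_self a s)
    have ih' := ih (fun x hx => h x (Multiset.mem_cons_of_mem hx))
    simp only [Multiset.map_cons, Multiset.sum_cons, Multiset.card_cons]
    rw [Nat.cast_add, ih', Int.toNat_of_nonneg ha]
    push_cast
    ring

lemma card_filter_eq_sum (M : ℕ) (ρ : Multiset ℕ) (hρ : ∀ p ∈ ρ, 1 ≤ p ∧ p ≤ M)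
    (P : ℕ → Prop) [DecidablePred P] :
    ((ρ.filter P).card : ℤ) = ∑ n ∈ Finset.Icc 1 M, (if P n then (ρ.count n : ℤ) else 0) := by
  induction ρ using Multiset.induction with
  | empty => simp
  | cons a ρ ih =>
    have ha := hρ a (Multiset.mem_cons_self a ρ)
    have ih' := ih (fun p hp => hρ p (Multiset.mem_cons_of_mem hp))
    have hmem : a ∈ Finset.Icc 1 M := Finset.mem_Icc.mpr ⟨ha.1, ha.2⟩
    have h1 : ∀ n ∈ Finset.Icc 1 M, (if P n then (((a ::ₘ ρ).count n : ℤ)) else 0)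
        = (if P n then (ρ.count n : ℤ) else 0) + (if n = a then (if P n then (1:ℤ) else 0) else 0) := by
      intro n _
      by_cases h2 : n = a
      · subst h2
        by_cases h : P n <;> simp [h, Multiset.count_cons] <;> push_cast <;> ring
      · by_cases h : P n <;> simp [h, h2, Multiset.count_cons]
    rw [Finset.sum_congr rfl h1, Finset.sum_add_distrib, ← ih',
      Finset.sum_ite_eq' _ a (fun n => if P n then (1:ℤ) else 0), if_pos hmem,
      Multiset.filter_cons]
    by_cases hPa : P a <;> simp [hPa]

lemma enat_sInf_mem {S : Set ℕ∞} (h : S.Nonempty) : sInf S ∈ S := by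
  by_cases hc : ∃ n : ℕ, (n : ℕ∞) ∈ S
  · obtain ⟨n0, hn0⟩ := hc
    have hAne : Set.Nonempty {n : ℕ | (n : ℕ∞) ∈ S} := ⟨n0, hn0⟩
    have hmem : ((sInf {n : ℕ | (n : ℕ∞) ∈ S} : ℕ) : ℕ∞) ∈ S := Nat.sInf_mem hAne
    have heq : sInf S = ((sInf {n : ℕ | (n : ℕ∞) ∈ S} : ℕ) : ℕ∞) := by
      refine le_antisymm (sInf_le hmem) (le_sInf ?_)
      intro b hb
      induction b using ENat.recTopCoe with
      | top => exact le_top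
      | coe m => exact_mod_cast Nat.sInf_le (hb : (m : ℕ∞) ∈ S)
    rw [heq]; exact hmem
  · obtain ⟨x, hx⟩ := h
    have hxt : x = ⊤ := by
      induction x using ENat.recTopCoe with
      | top => rfl
      | coe m => exact absurd ⟨m, hx⟩ hc
    have heq : sInf S = ⊤ := by
      refine le_antisymm le_top (le_sInf ?_)
      intro b hb
      induction b using ENat.recTopCoe with
      | top => exact le_rfl
      | coe m => exact absurd ⟨m, hb⟩ hc
    rw [heq, ← hxt]; exact hx

lemma finsum_finsum_eq (f : ℕ → ℕ → ℤ) (M : ℕ)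
    (h : ∀ k n, f k n ≠ 0 → (1 ≤ k ∧ k ≤ M ∧ 1 ≤ n ∧ n ≤ M)) :
    ∑ᶠ k, ∑ᶠ n, f k n = ∑ k ∈ Finset.Icc 1 M, ∑ n ∈ Finset.Icc 1 M, f k n := by
  have hin : ∀ k, ∑ᶠ n, f k n = ∑ n ∈ Finset.Icc 1 M, f k n := by
    intro k
    apply finsum_eq_sum_of_support_subset
    intro n hn
    have := h k n hn
    simp only [Finset.coe_Icc, Set.mem_Icc]
    exact ⟨this.2.2.1, this.2.2.2⟩
  rw [finsum_congr hin]
  apply finsum_eq_sum_of_support_subset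
  intro k hk
  simp only [Function.mem_support] at hk
  have : ∃ n ∈ Finset.Icc 1 M, f k n ≠ 0 := by
    by_contra hall
    push_neg at hall
    exact hk (Finset.sum_eq_zero hall)
  obtain ⟨n, _, hn⟩ := this
  have := h k n hn
  simp only [Finset.coe_Icc, Set.mem_Icc]
  exact ⟨this.1, this.2.1⟩

/-! ### Setup bundling the hypotheses -/

structure Setup where
  N : ℕ
  hN : 1 ≤ N
  ν : ℕ → Multiset ℕ
  J : ℕ → ℕ → Multiset ℕ
  hν0 : ν 0 = 0
  hpart : ∀ k p, p ∈ ν k → 1 ≤ p ∧ p ≤ N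
  hνz : ∀ k, N ≤ k → ν k = 0
  hJ0 : ∀ k n, k = 0 ∨ n = 0 → J k n = 0
  hJcard : ∀ k n, 1 ≤ k → 1 ≤ n → (J k n).card = mpart n (ν k)

namespace Setup

variable (S : Setup)

noncomputable def K : ℕ := sInf {k | ellTil S.J k = ⊤} - 1

noncomputable def ell (k : ℕ) : ℕ := (ellTil S.J k).toNat

lemma ell_zero : S.ell 0 = 1 := by simp [ell, ellTil]

lemma J_ne_zero {k n : ℕ} (h : S.J k n ≠ 0) :
    1 ≤ k ∧ 1 ≤ n ∧ n ∈ S.ν k ∧ k < S.N := by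
  have hk : ¬(k = 0 ∨ n = 0) := fun hc => h (S.hJ0 k n hc)
  push_neg at hk
  have h1 : 1 ≤ k := by omega
  have h2 : 1 ≤ n := by omega
  have hc : (S.J k n).card ≠ 0 := by
    simpa [Multiset.card_eq_zero] using h
  rw [S.hJcard k n h1 h2] at hc
  have hmem : n ∈ S.ν k := by
    rw [← Multiset.count_pos]
    unfold mpart at hc
    omega
  have hkN : k < S.N := by
    by_contra hge
    rw [S.hνz k (by omega)] at hmem
    simp at hmem
  exact ⟨h1, h2, hmem, hkN⟩

lemma top_succ {k : ℕ} (h : ellTil S.J k = ⊤) : ellTil S.J (k+1) = ⊤ := by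
  have hempty : {m : ℕ∞ | ∃ n : ℕ, m = (n : ℕ∞) ∧
      ellTil S.J k ≤ (n : ℕ∞) ∧ 1 ≤ n ∧ (0 : ℕ) ∈ S.J (k+1) n} = ∅ := by
    ext m
    simp only [Set.mem_setOf_eq, Set.mem_empty_iff_false, iff_false, not_exists]
    rintro n ⟨rfl, hle, _, _⟩
    rw [h] at hle
    exact absurd (le_antisymm le_top hle) (by simp)
  rw [ellTil, hempty, sInf_empty]

lemma ellTil_N_top : ellTil S.J S.N = ⊤ := by
  obtain ⟨M, hM⟩ : ∃ M, S.N = M + 1 := ⟨S.N - 1, by have := S.hN; omega⟩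
  rw [hM]
  have hempty : {m : ℕ∞ | ∃ n : ℕ, m = (n : ℕ∞) ∧
      ellTil S.J M ≤ (n : ℕ∞) ∧ 1 ≤ n ∧ (0 : ℕ) ∈ S.J (M+1) n} = ∅ := by
    ext m
    simp only [Set.mem_setOf_eq, Set.mem_empty_iff_false, iff_false, not_exists]
    rintro n ⟨rfl, hle, hn, h0⟩
    have hne : S.J (M+1) n ≠ 0 := by
      intro hz; rw [hz] at h0; simp at h0
    have := (S.J_ne_zero hne).2.2.2
    omega
  rw [ellTil, hempty, sInf_empty]

lemma K_add_one : S.K + 1 = sInf {k | ellTil S.J k = ⊤} := by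
  have h0 : 0 ∉ {k | ellTil S.J k = ⊤} := by
    simp only [Set.mem_setOf_eq, ellTil]
    intro h
    exact absurd h (by simp)
  have hmem := Nat.sInf_mem (⟨S.N, S.ellTil_N_top⟩ :
    Set.Nonempty {k | ellTil S.J k = ⊤})
  have hpos : sInf {k | ellTil S.J k = ⊤} ≠ 0 := fun hz => h0 (hz ▸ hmem)
  unfold K
  omega

lemma top_of_K_lt {k : ℕ} (h : S.K < k) : ellTil S.J k = ⊤ := by
  have base : ellTil S.J (S.K + 1) = ⊤ := by
    have := Nat.sInf_mem (⟨S.N, S.ellTil_N_top⟩ :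
      Set.Nonempty {k | ellTil S.J k = ⊤})
    rwa [← S.K_add_one] at this
  have hstep : ∀ j, ellTil S.J (S.K + 1 + j) = ⊤ := by
    intro j
    induction j with
    | zero => exact base
    | succ j ih => exact S.top_succ ih
  have : k = S.K + 1 + (k - S.K - 1) := by omega
  rw [this]
  exact hstep _

lemma ne_top_of_le_K {k : ℕ} (h : k ≤ S.K) : ellTil S.J k ≠ ⊤ := by
  intro hT
  have hle := Nat.sInf_le (show k ∈ {k' | ellTil S.J k' = ⊤} from hT)
  have := S.K_add_one
  omega

lemma ellTil_eq {k : ℕ} (h : k ≤ S.K) : ellTil S.J k = (S.ell k : ℕ∞) :=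
  (ENat.coe_toNat (S.ne_top_of_le_K h)).symm

lemma K_lt_N : S.K < S.N := by
  have hle := Nat.sInf_le (show S.N ∈ {k' | ellTil S.J k' = ⊤} from S.ellTil_N_top)
  have := S.K_add_one
  omega

lemma spec {k : ℕ} (h1 : 1 ≤ k) (hK : k ≤ S.K) :
    1 ≤ S.ell k ∧ (0 : ℕ) ∈ S.J k (S.ell k) ∧ ellTil S.J (k-1) ≤ (S.ell k : ℕ∞) := by
  obtain ⟨j, rfl⟩ : ∃ j, k = j + 1 := ⟨k - 1, by omega⟩
  have hne : ellTil S.J (j+1) ≠ ⊤ := S.ne_top_of_le_K hK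
  set T := {m : ℕ∞ | ∃ n : ℕ, m = (n : ℕ∞) ∧
      ellTil S.J j ≤ (n : ℕ∞) ∧ 1 ≤ n ∧ (0 : ℕ) ∈ S.J (j+1) n} with hT
  have hdef : ellTil S.J (j+1) = sInf T := by rw [ellTil]
  have hTne : T.Nonempty := by
    by_contra hc
    rw [Set.not_nonempty_iff_eq_empty] at hc
    exact hne (by rw [hdef, hc, sInf_empty])
  have hmem : ellTil S.J (j+1) ∈ T := by
    rw [hdef]; exact enat_sInf_mem hTne
  obtain ⟨n, hn_eq, hle, hn1, h0⟩ := hmem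
  have hell : S.ell (j+1) = n := by rw [ell, hn_eq, ENat.toNat_coe]
  rw [hell]
  simpa using ⟨hn1, h0, hle⟩

lemma ell_mono {k : ℕ} (h1 : 1 ≤ k) (hK : k ≤ S.K) : S.ell (k-1) ≤ S.ell k := by
  have h := (S.spec h1 hK).2.2
  rw [S.ellTil_eq (by omega : k - 1 ≤ S.K)] at h
  exact_mod_cast h

lemma ell_min {k n : ℕ} (h1 : 1 ≤ k) (hK : k ≤ S.K) (hn : 1 ≤ n)
    (hge : S.ell (k-1) ≤ n) (hlt : n < S.ell k) : (0 : ℕ) ∉ S.J k n := by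
  intro h0
  obtain ⟨j, rfl⟩ : ∃ j, k = j + 1 := ⟨k - 1, by omega⟩
  have hjle : ellTil S.J j ≤ (n : ℕ∞) := by
    rw [S.ellTil_eq (by omega : j ≤ S.K)]
    exact_mod_cast (by simpa using hge)
  have hle : ellTil S.J (j+1) ≤ (n : ℕ∞) := by
    rw [ellTil]
    exact sInf_le ⟨n, rfl, hjle, hn, h0⟩
  rw [S.ellTil_eq hK] at hle
  have : S.ell (j+1) ≤ n := by exact_mod_cast hle
  omega

lemma zero_notmem_succK {n : ℕ} (hn : 1 ≤ n) (hge : S.ell S.K ≤ n) :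
    (0 : ℕ) ∉ S.J (S.K + 1) n := by
  intro h0
  have htop : ellTil S.J (S.K + 1) = ⊤ := S.top_of_K_lt (by omega)
  have hjle : ellTil S.J S.K ≤ (n : ℕ∞) := by
    rw [S.ellTil_eq (le_refl S.K)]
    exact_mod_cast hge
  have hle : ellTil S.J (S.K + 1) ≤ (n : ℕ∞) := by
    rw [ellTil]
    exact sInf_le ⟨n, rfl, hjle, hn, h0⟩
  rw [htop] at hle
  exact absurd (le_antisymm le_top hle) (by simp)

lemma ell_mem {k : ℕ} (h1 : 1 ≤ k) (hK : k ≤ S.K) : S.ell k ∈ S.ν k := by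
  have h0 := (S.spec h1 hK).2.1
  have hne : S.J k (S.ell k) ≠ 0 := by
    intro hz; rw [hz] at h0; simp at h0
  exact (S.J_ne_zero hne).2.2.1

lemma ell_bound {k : ℕ} (hK : k ≤ S.K) : 1 ≤ S.ell k ∧ S.ell k ≤ S.N := by
  rcases Nat.eq_zero_or_pos k with rfl | h1
  · rw [S.ell_zero]; exact ⟨le_refl _, S.hN⟩
  · exact S.hpart k _ (S.ell_mem h1 hK)

end Setup

namespace Setup

variable (S : Setup)

/-- Indicator `χ(j ≤ K ∧ ℓ_j ≤ n)`. -/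
noncomputable def chi (j n : ℕ) : ℤ := if j ≤ S.K ∧ S.ell j ≤ n then 1 else 0

/-- The change of vacancy numbers under `δ̃`. -/
noncomputable def dP (k n : ℕ) : ℤ := 2 * S.chi k n - S.chi (k-1) n - S.chi (k+1) n

lemma chi_cases (j n : ℕ) : S.chi j n = 0 ∨ S.chi j n = 1 := by
  unfold chi; split_ifs <;> simp

lemma chi_succ_le (j n : ℕ) (hj : 1 ≤ j) : S.chi j n ≤ S.chi (j-1) n := by
  unfold chi
  split_ifs with h1 h2 h2
  · exact le_refl _
  · exact absurd ⟨by omega, le_trans (by simpa using S.ell_mono hj h1.1) h1.2⟩ h2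
  · norm_num
  · exact le_refl _

lemma dtNu_of_le {k : ℕ} (h1 : 1 ≤ k) (hK : k ≤ S.K) :
    dtNu S.ν S.J k = (S.ν k).erase (S.ell k)
      + (if S.ell k ≤ 1 then 0 else {S.ell k - 1}) := by
  unfold dtNu
  rw [if_neg (by omega), if_neg (S.ne_top_of_le_K hK)]
  rfl

lemma dtNu_of_gt {k : ℕ} (h : ¬(1 ≤ k ∧ k ≤ S.K)) : dtNu S.ν S.J k = S.ν k := by
  unfold dtNu
  by_cases hk : k = 0
  · rw [if_pos hk]
  · rw [if_neg hk, if_pos (S.top_of_K_lt (by omega))]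

lemma dtNu_part {k p : ℕ} (hp : p ∈ dtNu S.ν S.J k) : 1 ≤ p ∧ p ≤ S.N := by
  by_cases h : 1 ≤ k ∧ k ≤ S.K
  · rw [S.dtNu_of_le h.1 h.2] at hp
    rcases Multiset.mem_add.mp hp with hp | hp
    · exact S.hpart k p (Multiset.mem_of_mem_erase hp)
    · have hb := S.ell_bound h.2
      split_ifs at hp with hc
    -- impossible: mem of 0
      · simp at hp
      · rw [Multiset.mem_singleton] at hp
        omega
  · rw [S.dtNu_of_gt h] at hp
    exact S.hpart k p hp

lemma dtNu_zero {k : ℕ} (h : S.N ≤ k) : dtNu S.ν S.J k = 0 := by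
  rw [S.dtNu_of_gt (by have := S.K_lt_N; omega), S.hνz k h]

lemma Qn_add (n : ℕ) (x y : Multiset ℕ) : Qn n (x + y) = Qn n x + Qn n y := by
  simp [Qn]

lemma Qn_erase {ρ : Multiset ℕ} {a : ℕ} (h : a ∈ ρ) (n : ℕ) :
    (Qn n ρ : ℤ) = (Qn n (ρ.erase a) : ℤ) + min a n := by
  conv_lhs => rw [← Multiset.cons_erase h]
  simp only [Qn, Multiset.map_cons, Multiset.sum_cons]
  push_cast
  ring

lemma Qn_dtNu (k n : ℕ) (h1 : 1 ≤ k) :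
    (Qn n (dtNu S.ν S.J k) : ℤ) = (Qn n (S.ν k) : ℤ) - S.chi k n := by
  by_cases hK : k ≤ S.K
  · rw [S.dtNu_of_le h1 hK, Qn_add, Qn_erase (S.ell_mem h1 hK) n]
    have hb := S.ell_bound hK
    have hq : (Qn n (if S.ell k ≤ 1 then (0 : Multiset ℕ) else {S.ell k - 1}) : ℤ)
        = if S.ell k ≤ 1 then 0 else ((min (S.ell k - 1) n : ℕ) : ℤ) := by
      split_ifs <;> simp [Qn]
    push_cast [hq]
    unfold chi
    simp only [hK, true_and]
    split_ifs <;> push_cast <;> omega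
  · rw [S.dtNu_of_gt (by omega)]
    unfold chi
    rw [if_neg (by omega)]
    ring

lemma alpha_dtNu (k n : ℕ) (h1 : 1 ≤ k) (hn : 1 ≤ n) :
    (alphaC (dtNu S.ν S.J) k n : ℤ)
      = (alphaC S.ν k n : ℤ) - (if k ≤ S.K ∧ n = S.ell k then 1 else 0) := by
  unfold alphaC
  by_cases hK : k ≤ S.K
  · rw [S.dtNu_of_le h1 hK]
    rw [Multiset.filter_add, Multiset.card_add]
    have hb := S.ell_bound hK
    have herase : (((S.ν k).erase (S.ell k)).filter (fun p => n ≤ p)).card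
        = ((S.ν k).filter (fun p => n ≤ p)).card - (if n ≤ S.ell k then 1 else 0) := by
      conv_rhs => rw [← Multiset.cons_erase (S.ell_mem h1 hK)]
      rw [Multiset.filter_cons]
      split_ifs with hc <;> simp
    rw [herase]
    have hsing : ((if S.ell k ≤ 1 then (0 : Multiset ℕ) else {S.ell k - 1}).filter
        (fun p => n ≤ p)).card = if S.ell k ≤ 1 then 0 else (if n ≤ S.ell k - 1 then 1 else 0) := by
      split_ifs with hc hd <;> simp_all [Multiset.filter_singleton]
    rw [hsing]
    simp only [hK, true_and]
    by_cases hnl : n ≤ S.ell k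
    · have hC : 1 ≤ ((S.ν k).filter (fun p => n ≤ p)).card := by
        rw [Nat.succ_le_iff, Multiset.card_pos_iff_exists_mem]
        exact ⟨S.ell k, Multiset.mem_filter.mpr ⟨S.ell_mem h1 hK, hnl⟩⟩
      rw [if_pos hnl]
      split_ifs <;> push_cast <;> omega
    · rw [if_neg hnl]
      split_ifs <;> push_cast <;> omega
  · rw [S.dtNu_of_gt (by omega), if_neg (by omega)]
    ring

end Setup

lemma multiset_coe_bind (s : Multiset ℕ) :
    (do let a ← s; pure ((a : ℕ) : ℤ) : Multiset ℤ) = s.map (fun a : ℕ => (a : ℤ)) := by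
  simp [Multiset.bind_singleton]

lemma sum_map_comp_toNat (s : Multiset ℕ) (c A B : ℤ) (hAB : A - B = c)
    (h : ∀ x ∈ s, 0 ≤ (x : ℤ) + c) :
    ((Multiset.map (fun x : ℤ => (x + A - B).toNat) (s.map (fun a : ℕ => (a : ℤ)))).sum : ℤ)
      = (s.sum : ℤ) + c * s.card := by
  rw [Multiset.map_map]
  have hcomp : ((fun x : ℤ => (x + A - B).toNat) ∘ fun a : ℕ => (a : ℤ))
      = fun x : ℕ => ((x : ℤ) + c).toNat := by
    funext x
    simp only [Function.comp_apply]
    congr 1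
    rw [← hAB]
    ring
  rw [hcomp]
  exact sum_map_toNat_shift s c h

lemma Qn_xi_replicate (m k n : ℕ) (hn : 1 ≤ n) :
    (Qn n (xiR (List.replicate m ((1,1) : Rect)) k) : ℤ) = if k = 1 then (m : ℤ) else 0 := by
  have hxi : xiR (List.replicate m ((1,1) : Rect)) k
      = if k = 1 then Multiset.replicate m 1 else 0 := by
    unfold xiR
    by_cases hk : k = 1
    · rw [if_pos hk, List.filter_replicate, if_pos (by simp [beq_iff_eq, hk]),
        List.map_replicate]
      simp [Multiset.coe_replicate]
    · rw [if_neg hk, List.filter_replicate,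
        if_neg (by simp [beq_iff_eq]; omega), List.map_nil]
      rfl
  rw [hxi]
  by_cases hk : k = 1
  · rw [if_pos hk, if_pos hk]
    simp [Qn, Multiset.map_replicate, Multiset.sum_replicate, min_eq_left hn]
  · rw [if_neg hk, if_neg hk]
    simp [Qn]

namespace Setup

variable (S : Setup)

lemma chi_nonneg (j n : ℕ) : 0 ≤ S.chi j n := by unfold chi; split_ifs <;> norm_num

lemma chi_le_one (j n : ℕ) : S.chi j n ≤ 1 := by unfold chi; split_ifs <;> norm_num

lemma dP_eval_ell (k : ℕ) (h1 : 1 ≤ k) (hK : k ≤ S.K) :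
    S.dP k (S.ell k) = 1 - (if k + 1 ≤ S.K ∧ S.ell (k+1) ≤ S.ell k then 1 else 0) := by
  unfold dP chi
  rw [if_pos ⟨hK, le_refl _⟩, if_pos ⟨(by omega : k - 1 ≤ S.K), S.ell_mono h1 hK⟩]
  have harith : k + 1 - 1 = k := by omega
  ring

lemma vac_diff (k n : ℕ) (h1 : 1 ≤ k) (hn : 1 ≤ n) :
    vacZ (List.replicate (S.N - 1) ((1,1) : Rect)) (dtNu S.ν S.J) k n
      - vacZ (List.replicate S.N ((1,1) : Rect)) S.ν k n = S.dP k n := by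
  unfold vacZ
  rw [Qn_xi_replicate (S.N - 1) k n hn, Qn_xi_replicate S.N k n hn,
      S.Qn_dtNu k n h1, S.Qn_dtNu (k+1) n (by omega)]
  have hXi : (if k = 1 then ((S.N - 1 : ℕ) : ℤ) else 0) - (if k = 1 then (S.N : ℤ) else 0)
      + (Qn n (dtNu S.ν S.J (k-1)) : ℤ) - (Qn n (S.ν (k-1)) : ℤ) = - S.chi (k-1) n := by
    by_cases hk : k = 1
    · subst hk
      simp only [show (1:ℕ) - 1 = 0 from rfl]
      rw [S.dtNu_of_gt (k := 0) (by omega)]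
      have hchi : S.chi 0 n = 1 := by
        unfold chi
        rw [if_pos ⟨Nat.zero_le _, by rw [S.ell_zero]; exact hn⟩]
      rw [hchi]
      have := S.hN
      norm_num
      omega
    · rw [S.Qn_dtNu (k-1) n (by omega), if_neg hk, if_neg hk]
      ring
  unfold dP
  linarith [hXi]

lemma dtJ_sum (k n : ℕ) (h1 : 1 ≤ k) (hn : 1 ≤ n) :
    ((dtJ (List.replicate S.N ((1,1) : Rect)) (List.replicate (S.N - 1) ((1,1) : Rect))
        S.ν S.J k n).sum : ℤ)
      = ((S.J k n).sum : ℤ) + S.dP k n *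
          (((S.J k n).card : ℤ) - (if k ≤ S.K ∧ n = S.ell k then 1 else 0)) := by
  have hne : ¬(k = 0 ∨ n = 0) := by omega
  have hcond : (ellTil S.J k = (n : ℕ∞)) ↔ (k ≤ S.K ∧ n = S.ell k) := by
    constructor
    · intro h
      by_cases hK : k ≤ S.K
      · rw [S.ellTil_eq hK] at h
        exact ⟨hK, by exact_mod_cast h.symm⟩
      · rw [S.top_of_K_lt (by omega)] at h
        exact absurd h.symm (by simp)
    · rintro ⟨hK, rfl⟩
      exact S.ellTil_eq hK
  have hfun : ∀ x : ℕ, ((x : ℤ) + vacZ (List.replicate (S.N - 1) ((1,1) : Rect))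
        (dtNu S.ν S.J) k n - vacZ (List.replicate S.N ((1,1) : Rect)) S.ν k n).toNat
      = ((x : ℤ) + S.dP k n).toNat := by
    intro x
    congr 1
    rw [← S.vac_diff k n h1 hn]
    ring
  have hdP : S.dP k n = 2 * S.chi k n - S.chi (k-1) n - S.chi (k+1) n := rfl
  have hs1 : S.chi k n ≤ S.chi (k-1) n := S.chi_succ_le k n h1
  have hs2 : S.chi (k+1) n ≤ S.chi k n := by
    have := S.chi_succ_le (k+1) n (by omega)
    simpa using this
  by_cases hcc : k ≤ S.K ∧ n = S.ell k
  · have hEll : ellTil S.J k = (n : ℕ∞) := hcond.mpr hcc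
    have hEll2 : ¬(ellTil S.J k = ((n+1 : ℕ) : ℕ∞)) := by
      rw [hEll]
      intro h
      have : n = n + 1 := by exact_mod_cast h
      omega
    have h0mem : (0 : ℕ) ∈ S.J k n := by
      rw [hcc.2]
      exact (S.spec h1 hcc.1).2.1
    have hdPge : 0 ≤ S.dP k n := by
      rw [hcc.2, S.dP_eval_ell k h1 hcc.1]
      split_ifs <;> norm_num
    have key : ∀ x ∈ (S.J k n).erase 0, 0 ≤ (x : ℤ) + S.dP k n :=
      fun x _ => add_nonneg (Int.natCast_nonneg x) hdPge
    simp only [dtJ, if_neg hne, if_pos hEll, if_neg hEll2, add_zero]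
    rw [multiset_coe_bind ((S.J k n).erase 0),
      sum_map_comp_toNat _ (S.dP k n) _ _ (S.vac_diff k n h1 hn) key]
    have hsum : ((S.J k n).erase 0).sum = (S.J k n).sum := by
      conv_rhs => rw [← Multiset.cons_erase h0mem]
      simp
    have hcard1 : 1 ≤ (S.J k n).card :=
      Multiset.card_pos.mpr (fun hz => by simp [hz] at h0mem)
    have hcard : (((S.J k n).erase 0).card : ℤ) = ((S.J k n).card : ℤ) - 1 := by
      rw [Multiset.card_erase_of_mem h0mem, Nat.pred_eq_sub_one]
      omega
    rw [hsum, hcard, if_pos hcc]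
  · have hEll' : ellTil S.J k ≠ (n : ℕ∞) := fun h => hcc (hcond.mp h)
    have key : ∀ x ∈ S.J k n, 0 ≤ (x : ℤ) + S.dP k n := by
      intro x hx
      by_cases hx0 : x = 0
      · subst hx0
        simp only [Nat.cast_zero, zero_add]
        by_cases hC1 : k ≤ S.K ∧ S.ell k ≤ n
        · have h1' : S.chi k n = 1 := by unfold chi; rw [if_pos hC1]
          linarith [S.chi_le_one (k-1) n, S.chi_le_one (k+1) n]
        · have h1' : S.chi k n = 0 := by unfold chi; rw [if_neg hC1]
          by_cases hC0 : k - 1 ≤ S.K ∧ S.ell (k-1) ≤ n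
          · exfalso
            by_cases hK : k ≤ S.K
            · have hltn : n < S.ell k := by
                by_contra hge
                exact hC1 ⟨hK, by omega⟩
              exact S.ell_min h1 hK hn hC0.2 hltn hx
            · have hC01 := hC0.1
              have hkK : k = S.K + 1 := by omega
              subst hkK
              refine S.zero_notmem_succK hn ?_ hx
              simpa using hC0.2
          · have h0' : S.chi (k-1) n = 0 := by unfold chi; rw [if_neg hC0]
            linarith [S.chi_nonneg (k+1) n]
      · have hx1 : 1 ≤ (x : ℤ) := by exact_mod_cast Nat.one_le_iff_ne_zero.mpr hx0
        linarith [S.chi_le_one (k-1) n, S.chi_nonneg (k+1) n, S.chi_nonneg k n]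
    simp only [dtJ, if_neg hne, if_neg hEll']
    rw [Multiset.sum_add, Nat.cast_add,
      multiset_coe_bind (S.J k n),
      sum_map_comp_toNat _ (S.dP k n) _ _ (S.vac_diff k n h1 hn) key]
    have h2 : (((if ellTil S.J k = ((n+1 : ℕ) : ℕ∞) then ({0} : Multiset ℕ) else 0)).sum : ℤ)
        = 0 := by
      split_ifs <;> simp
    rw [h2, if_neg hcc]
    ring

end Setup

namespace Setup

variable (S : Setup)

/-- `[j ≤ K] · α^{(k)}_{ℓ_j}`. -/
noncomputable def al (k j : ℕ) : ℤ :=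
  if j ≤ S.K then (alphaC S.ν k (S.ell j) : ℤ) else 0

lemma sum_ind (j : ℕ) (f : ℕ → ℤ) :
    (∑ n ∈ Finset.Icc 1 S.N, if j ≤ S.K ∧ n = S.ell j then f n else 0)
      = if j ≤ S.K then f (S.ell j) else 0 := by
  by_cases hj : j ≤ S.K
  · have hb := S.ell_bound hj
    have hmem : S.ell j ∈ Finset.Icc 1 S.N := Finset.mem_Icc.mpr ⟨hb.1, hb.2⟩
    rw [if_pos hj]
    have hcg : ∀ n ∈ Finset.Icc 1 S.N,
        (if j ≤ S.K ∧ n = S.ell j then f n else 0) = (if n = S.ell j then f n else 0) := by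
      intro n _
      simp only [hj, true_and]
    rw [Finset.sum_congr rfl hcg, Finset.sum_ite_eq' _ (S.ell j) f, if_pos hmem]
  · rw [if_neg hj]
    apply Finset.sum_eq_zero
    intro n _
    rw [if_neg (by tauto)]

lemma sum_chi_count (j : ℕ) (ρ : Multiset ℕ) (hρ : ∀ p ∈ ρ, 1 ≤ p ∧ p ≤ S.N) :
    (∑ n ∈ Finset.Icc 1 S.N, S.chi j n * (ρ.count n : ℤ))
      = if j ≤ S.K then ((ρ.filter (fun p => S.ell j ≤ p)).card : ℤ) else 0 := by
  by_cases hj : j ≤ S.K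
  · rw [if_pos hj, card_filter_eq_sum S.N ρ hρ (fun p => S.ell j ≤ p)]
    apply Finset.sum_congr rfl
    intro n _
    unfold chi
    simp only [hj, true_and]
    split_ifs <;> ring
  · rw [if_neg hj]
    apply Finset.sum_eq_zero
    intro n _
    unfold chi
    rw [if_neg (by tauto)]
    ring

lemma rowB (k : ℕ) (h1 : 1 ≤ k) :
    (∑ n ∈ Finset.Icc 1 S.N,
        (((dtJ (List.replicate S.N ((1,1) : Rect)) (List.replicate (S.N - 1) ((1,1) : Rect))
            S.ν S.J k n).sum : ℤ) - ((S.J k n).sum : ℤ)))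
      = 2 * S.al k k - S.al k (k-1) - S.al k (k+1)
        - (if k ≤ S.K then 1 else 0)
        + (if k + 1 ≤ S.K ∧ S.ell (k+1) ≤ S.ell k then 1 else 0) := by
  have hρ : ∀ p ∈ S.ν k, 1 ≤ p ∧ p ≤ S.N := fun p hp => S.hpart k p hp
  have step : ∀ n ∈ Finset.Icc 1 S.N,
      ((dtJ (List.replicate S.N ((1,1) : Rect)) (List.replicate (S.N - 1) ((1,1) : Rect))
          S.ν S.J k n).sum : ℤ) - ((S.J k n).sum : ℤ)
        = (2 * (S.chi k n * ((S.ν k).count n : ℤ))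
            - S.chi (k-1) n * ((S.ν k).count n : ℤ)
            - S.chi (k+1) n * ((S.ν k).count n : ℤ))
          - (if k ≤ S.K ∧ n = S.ell k then S.dP k n else 0) := by
    intro n hn
    obtain ⟨hn1, _⟩ := Finset.mem_Icc.mp hn
    rw [S.dtJ_sum k n h1 hn1]
    have hcnt : ((S.J k n).card : ℤ) = ((S.ν k).count n : ℤ) := by
      rw [S.hJcard k n h1 hn1]; rfl
    have hdP : S.dP k n = 2 * S.chi k n - S.chi (k-1) n - S.chi (k+1) n := rfl
    rw [hcnt, hdP]
    split_ifs <;> ring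
  rw [Finset.sum_congr rfl step, Finset.sum_sub_distrib, Finset.sum_sub_distrib,
    Finset.sum_sub_distrib, ← Finset.mul_sum]
  rw [S.sum_chi_count k (S.ν k) hρ, S.sum_chi_count (k-1) (S.ν k) hρ,
    S.sum_chi_count (k+1) (S.ν k) hρ, S.sum_ind k (fun n => S.dP k n)]
  have hE : (if k ≤ S.K then S.dP k (S.ell k) else 0)
      = (if k ≤ S.K then 1 else 0)
        - (if k + 1 ≤ S.K ∧ S.ell (k+1) ≤ S.ell k then 1 else 0) := by
    by_cases hk : k ≤ S.K
    · rw [if_pos hk, if_pos hk, S.dP_eval_ell k h1 hk]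
    · rw [if_neg hk, if_neg hk, if_neg (fun hc => hk (by omega : k ≤ S.K))]
      ring
  rw [hE]
  unfold al alphaC
  ring

lemma rowA (k : ℕ) (h1 : 1 ≤ k) :
    (∑ n ∈ Finset.Icc 1 S.N,
        ((alphaC S.ν k n : ℤ) * ((alphaC S.ν k n : ℤ) - (alphaC S.ν (k+1) n : ℤ))
          - (alphaC (dtNu S.ν S.J) k n : ℤ)
            * ((alphaC (dtNu S.ν S.J) k n : ℤ) - (alphaC (dtNu S.ν S.J) (k+1) n : ℤ))))
      = 2 * S.al k k - S.al k (k+1) - S.al (k+1) k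
        - (if k ≤ S.K then 1 else 0)
        + (if k + 1 ≤ S.K ∧ S.ell (k+1) ≤ S.ell k then 1 else 0) := by
  have step : ∀ n ∈ Finset.Icc 1 S.N,
      ((alphaC S.ν k n : ℤ) * ((alphaC S.ν k n : ℤ) - (alphaC S.ν (k+1) n : ℤ))
        - (alphaC (dtNu S.ν S.J) k n : ℤ)
          * ((alphaC (dtNu S.ν S.J) k n : ℤ) - (alphaC (dtNu S.ν S.J) (k+1) n : ℤ)))
      = (if k ≤ S.K ∧ n = S.ell k then
            2 * (alphaC S.ν k n : ℤ) - (alphaC S.ν (k+1) n : ℤ) - 1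
              + (if k + 1 ≤ S.K ∧ n = S.ell (k+1) then 1 else 0)
          else 0)
        + (if k + 1 ≤ S.K ∧ n = S.ell (k+1) then -(alphaC S.ν k n : ℤ) else 0) := by
    intro n hn
    obtain ⟨hn1, _⟩ := Finset.mem_Icc.mp hn
    rw [S.alpha_dtNu k n h1 hn1, S.alpha_dtNu (k+1) n (by omega) hn1]
    split_ifs <;> ring
  rw [Finset.sum_congr rfl step, Finset.sum_add_distrib,
    S.sum_ind k (fun n => 2 * (alphaC S.ν k n : ℤ) - (alphaC S.ν (k+1) n : ℤ) - 1
      + (if k + 1 ≤ S.K ∧ n = S.ell (k+1) then 1 else 0)),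
    S.sum_ind (k+1) (fun n => -(alphaC S.ν k n : ℤ))]
  unfold al
  by_cases hk : k ≤ S.K
  · by_cases hk2 : k + 1 ≤ S.K
    · have hmono : S.ell k ≤ S.ell (k+1) := by
        have := S.ell_mono (k := k+1) (by omega) hk2
        simpa using this
      by_cases hee : S.ell (k+1) ≤ S.ell k
      · have heq : S.ell k = S.ell (k+1) := le_antisymm hmono hee
        simp only [heq, hk, hk2, if_true, and_self, le_refl, if_pos]
        try ring
      · have hne : S.ell k ≠ S.ell (k+1) := fun h => hee (le_of_eq h.symm)
        simp [hk, hk2, hne, hee]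
        try ring
    · simp [hk, hk2]
      try ring
  · have hk2 : ¬(k + 1 ≤ S.K) := by omega
    simp [hk, hk2]
    try ring

end Setup

namespace Setup

variable (S : Setup)

lemma g1_supp (νf : ℕ → Multiset ℕ) (hpartf : ∀ k p, p ∈ νf k → 1 ≤ p ∧ p ≤ S.N)
    (hzf : ∀ k, S.N ≤ k → νf k = 0) :
    ∀ k n, (if 1 ≤ k ∧ 1 ≤ n then
        (alphaC νf k n : ℤ) * ((alphaC νf k n : ℤ) - (alphaC νf (k+1) n : ℤ)) else 0) ≠ 0 →
      1 ≤ k ∧ k ≤ S.N ∧ 1 ≤ n ∧ n ≤ S.N := by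
  intro k n h
  by_cases hkn : 1 ≤ k ∧ 1 ≤ n
  · rw [if_pos hkn] at h
    have hα : alphaC νf k n ≠ 0 := by
      intro hz
      rw [hz] at h
      simp at h
    unfold alphaC at hα
    have hfil : (νf k).filter (fun p => n ≤ p) ≠ 0 := by
      intro hz
      rw [hz] at hα
      simp at hα
    obtain ⟨p, hp⟩ := Multiset.exists_mem_of_ne_zero hfil
    rw [Multiset.mem_filter] at hp
    have hpN := hpartf k p hp.1
    have hkN : k ≤ S.N := by
      by_contra hgt
      have hmem := hp.1
      rw [hzf k (by omega)] at hmem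
      simp at hmem
    exact ⟨hkn.1, hkN, hkn.2, by omega⟩
  · rw [if_neg hkn] at h
    exact absurd rfl h

lemma g3_supp : ∀ k n, ((S.J k n).sum : ℤ) ≠ 0 →
    1 ≤ k ∧ k ≤ S.N ∧ 1 ≤ n ∧ n ≤ S.N := by
  intro k n h
  have hJ : S.J k n ≠ 0 := by
    intro hz
    rw [hz] at h
    simp at h
  obtain ⟨h1, h2, h3, h4⟩ := S.J_ne_zero hJ
  have := S.hpart k n h3
  exact ⟨h1, by omega, h2, by omega⟩

lemma g4_supp : ∀ k n,
    ((dtJ (List.replicate S.N ((1,1) : Rect)) (List.replicate (S.N - 1) ((1,1) : Rect))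
        S.ν S.J k n).sum : ℤ) ≠ 0 →
    1 ≤ k ∧ k ≤ S.N ∧ 1 ≤ n ∧ n ≤ S.N := by
  intro k n h
  by_cases hkn : 1 ≤ k ∧ 1 ≤ n
  · have hJ : S.J k n ≠ 0 := by
      intro hz
      apply h
      rw [S.dtJ_sum k n hkn.1 hkn.2, hz]
      have hnc : ¬(k ≤ S.K ∧ n = S.ell k) := by
        rintro ⟨hK, he⟩
        have h0 := (S.spec hkn.1 hK).2.1
        rw [← he, hz] at h0
        simp at h0
      rw [if_neg hnc]
      simp
    obtain ⟨h1, h2, h3, h4⟩ := S.J_ne_zero hJ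
    have := S.hpart k n h3
    exact ⟨h1, by omega, h2, by omega⟩
  · exfalso
    apply h
    have hor : k = 0 ∨ n = 0 := by omega
    simp only [dtJ, if_pos hor]
    rw [S.hJ0 k n hor]
    simp

lemma main :
    ccRC S.ν S.J - ccRC (dtNu S.ν S.J)
        (dtJ (List.replicate S.N ((1,1) : Rect)) (List.replicate (S.N - 1) ((1,1) : Rect))
          S.ν S.J)
      = (alphaC S.ν 1 1 : ℤ) := by
  have hconv1 := finsum_finsum_eq (fun k n => if 1 ≤ k ∧ 1 ≤ n then
      (alphaC S.ν k n : ℤ) * ((alphaC S.ν k n : ℤ) - (alphaC S.ν (k+1) n : ℤ)) else 0) S.N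
    (S.g1_supp S.ν S.hpart S.hνz)
  have hconv2 := finsum_finsum_eq (fun k n => if 1 ≤ k ∧ 1 ≤ n then
      (alphaC (dtNu S.ν S.J) k n : ℤ) * ((alphaC (dtNu S.ν S.J) k n : ℤ)
        - (alphaC (dtNu S.ν S.J) (k+1) n : ℤ)) else 0) S.N
    (S.g1_supp (dtNu S.ν S.J) (fun _ _ hp => S.dtNu_part hp) (fun _ hk => S.dtNu_zero hk))
  have hconv3 := finsum_finsum_eq (fun k n => ((S.J k n).sum : ℤ)) S.N S.g3_supp
  have hconv4 := finsum_finsum_eq (fun k n =>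
      ((dtJ (List.replicate S.N ((1,1) : Rect)) (List.replicate (S.N - 1) ((1,1) : Rect))
        S.ν S.J k n).sum : ℤ)) S.N S.g4_supp
  have E1 : ccRC S.ν S.J
      = (∑ k ∈ Finset.Icc 1 S.N, ∑ n ∈ Finset.Icc 1 S.N, (if 1 ≤ k ∧ 1 ≤ n then
            (alphaC S.ν k n : ℤ) * ((alphaC S.ν k n : ℤ) - (alphaC S.ν (k+1) n : ℤ)) else 0))
        + (∑ k ∈ Finset.Icc 1 S.N, ∑ n ∈ Finset.Icc 1 S.N, ((S.J k n).sum : ℤ)) :=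
    congrArg₂ (· + ·) hconv1 hconv3
  have E2 : ccRC (dtNu S.ν S.J)
        (dtJ (List.replicate S.N ((1,1) : Rect)) (List.replicate (S.N - 1) ((1,1) : Rect))
          S.ν S.J)
      = (∑ k ∈ Finset.Icc 1 S.N, ∑ n ∈ Finset.Icc 1 S.N, (if 1 ≤ k ∧ 1 ≤ n then
            (alphaC (dtNu S.ν S.J) k n : ℤ) * ((alphaC (dtNu S.ν S.J) k n : ℤ)
              - (alphaC (dtNu S.ν S.J) (k+1) n : ℤ)) else 0))
        + (∑ k ∈ Finset.Icc 1 S.N, ∑ n ∈ Finset.Icc 1 S.N,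
            ((dtJ (List.replicate S.N ((1,1) : Rect)) (List.replicate (S.N - 1) ((1,1) : Rect))
              S.ν S.J k n).sum : ℤ)) :=
    congrArg₂ (· + ·) hconv2 hconv4
  rw [E1, E2]
  have hsplit : ∀ X Y Z W : ℤ, (X + Y) - (Z + W) = (X - Z) - (W - Y) := by intros; ring
  rw [hsplit, ← Finset.sum_sub_distrib, ← Finset.sum_sub_distrib, ← Finset.sum_sub_distrib]
  have hrow : ∀ k ∈ Finset.Icc 1 S.N,
      ((∑ n ∈ Finset.Icc 1 S.N, (if 1 ≤ k ∧ 1 ≤ n then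
            (alphaC S.ν k n : ℤ) * ((alphaC S.ν k n : ℤ) - (alphaC S.ν (k+1) n : ℤ)) else 0))
        - (∑ n ∈ Finset.Icc 1 S.N, (if 1 ≤ k ∧ 1 ≤ n then
            (alphaC (dtNu S.ν S.J) k n : ℤ) * ((alphaC (dtNu S.ν S.J) k n : ℤ)
              - (alphaC (dtNu S.ν S.J) (k+1) n : ℤ)) else 0)))
      - ((∑ n ∈ Finset.Icc 1 S.N,
            ((dtJ (List.replicate S.N ((1,1) : Rect)) (List.replicate (S.N - 1) ((1,1) : Rect))
              S.ν S.J k n).sum : ℤ))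
        - (∑ n ∈ Finset.Icc 1 S.N, ((S.J k n).sum : ℤ)))
      = S.al k (k-1) - S.al (k+1) k := by
    intro k hk
    obtain ⟨hk1, _⟩ := Finset.mem_Icc.mp hk
    rw [← Finset.sum_sub_distrib, ← Finset.sum_sub_distrib]
    have hcg1 : ∀ n ∈ Finset.Icc 1 S.N,
        ((if 1 ≤ k ∧ 1 ≤ n then
            (alphaC S.ν k n : ℤ) * ((alphaC S.ν k n : ℤ) - (alphaC S.ν (k+1) n : ℤ)) else 0)
          - (if 1 ≤ k ∧ 1 ≤ n then
            (alphaC (dtNu S.ν S.J) k n : ℤ) * ((alphaC (dtNu S.ν S.J) k n : ℤ)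
              - (alphaC (dtNu S.ν S.J) (k+1) n : ℤ)) else 0))
        = ((alphaC S.ν k n : ℤ) * ((alphaC S.ν k n : ℤ) - (alphaC S.ν (k+1) n : ℤ))
            - (alphaC (dtNu S.ν S.J) k n : ℤ) * ((alphaC (dtNu S.ν S.J) k n : ℤ)
              - (alphaC (dtNu S.ν S.J) (k+1) n : ℤ))) := by
      intro n hn
      obtain ⟨hn1, _⟩ := Finset.mem_Icc.mp hn
      rw [if_pos ⟨hk1, hn1⟩, if_pos ⟨hk1, hn1⟩]
    rw [Finset.sum_congr rfl hcg1, S.rowA k hk1, S.rowB k hk1]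
    unfold al
    ring
  rw [Finset.sum_congr rfl hrow]
  have htel : ∑ k ∈ Finset.Icc 1 S.N, (S.al k (k-1) - S.al (k+1) k)
      = S.al 1 0 - S.al (S.N + 1) S.N := by
    rw [show Finset.Icc 1 S.N = Finset.Ico 1 (S.N + 1) from (Finset.Ico_add_one_right_eq_Icc 1 S.N).symm,
      Finset.sum_Ico_eq_sum_range]
    have hcg : ∀ i ∈ Finset.range (S.N + 1 - 1),
        S.al (1 + i) (1 + i - 1) - S.al (1 + i + 1) (1 + i)
          = (fun j => S.al (j + 1) j) i - (fun j => S.al (j + 1) j) (i + 1) := by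
      intro i _
      have e1 : 1 + i = i + 1 := by omega
      rw [e1]
      simp only [Nat.add_sub_cancel]
    rw [Finset.sum_congr rfl hcg, Finset.sum_range_sub' (fun j => S.al (j + 1) j)]
    have e3 : S.N + 1 - 1 = S.N := by omega
    rw [e3]
  rw [htel]
  have hT1 : S.al 1 0 = (alphaC S.ν 1 1 : ℤ) := by
    unfold al
    rw [if_pos (Nat.zero_le _), S.ell_zero]
  have hTN : S.al (S.N + 1) S.N = 0 := by
    unfold al
    rw [if_neg (by have := S.K_lt_N; omega)]
  rw [hT1, hTN, sub_zero]

end Setup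
/-- drop of the statistic `cc` under `δ̃` when `R` consists
of single boxes: `cc(ν,J) − cc(δ̃(ν,J)) = α^{(1)}_1`, the number of parts of
`ν^{(1)}`. -/
theorem statement15 (lam : Multiset ℕ) (N : ℕ) (hN : 1 ≤ N)
    (hlam : 0 ∉ lam) (hsum : lam.sum = N)
    (R : List Rect) (hR : R = List.replicate N ((1,1) : Rect))
    (ν : ℕ → Multiset ℕ) (J : ℕ → ℕ → Multiset ℕ)
    (hRC : IsRC lam R ν J) :
    ccRC ν J - ccRC (dtNu ν J) (dtJ R (List.replicate (N-1) ((1,1) : Rect)) ν J)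
      = (alphaC ν 1 1 : ℤ) := by
  subst hR
  have hν0 : ν 0 = 0 := hRC.1.1
  have hνpos : ∀ k, 0 ∉ ν k := hRC.1.2.1
  have hsize : ∀ k, 1 ≤ k → (ν k).sum = sumTail lam k := by
    intro k hk
    have h := hRC.1.2.2 k hk
    have hrep : ((List.replicate N ((1,1) : Rect)).map (fun r => r.2 * (r.1 - k))).sum = 0 := by
      rw [List.map_replicate, List.sum_replicate]
      have : ((1,1) : Rect).2 * (((1,1) : Rect).1 - k) = 0 := by
        simp only []
        omega
      rw [this]
      simp
    rw [hrep] at h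
    omega
  have hpart : ∀ k p, p ∈ ν k → 1 ≤ p ∧ p ≤ N := by
    intro k p hp
    rcases Nat.eq_zero_or_pos k with rfl | hk
    · rw [hν0] at hp
      simp at hp
    · constructor
      · have hne : p ≠ 0 := fun hz => (hνpos k) (hz ▸ hp)
        omega
      · have hle : p ≤ (ν k).sum := Multiset.single_le_sum (fun x _ => Nat.zero_le x) p hp
        have hst : sumTail lam k ≤ lam.sum := by
          unfold sumTail
          calc (lam.map (fun q => q - k)).sum
              ≤ (lam.map id).sum :=
                Multiset.sum_map_le_sum_map _ _ (fun i _ => Nat.sub_le i k)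
            _ = lam.sum := by rw [Multiset.map_id]
        rw [hsize k hk] at hle
        omega
  have hνz : ∀ k, N ≤ k → ν k = 0 := by
    intro k hk
    have hk1 : 1 ≤ k := by omega
    have hzero : sumTail lam k = 0 := by
      unfold sumTail
      rw [Multiset.sum_eq_zero_iff]
      intro x hx
      obtain ⟨q, hq, rfl⟩ := Multiset.mem_map.mp hx
      have : q ≤ lam.sum := Multiset.single_le_sum (fun x _ => Nat.zero_le x) q hq
      omega
    have hs := hsize k hk1
    rw [hzero] at hs
    have hall : ∀ x ∈ ν k, x = 0 := Multiset.sum_eq_zero_iff.mp hs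
    apply Multiset.eq_zero_of_forall_notMem
    intro x hx
    exact (hνpos k) ((hall x hx) ▸ hx)
  have hJ0 : ∀ k n, k = 0 ∨ n = 0 → J k n = 0 := hRC.2.2.1
  have hJcard : ∀ k n, 1 ≤ k → 1 ≤ n → (J k n).card = mpart n (ν k) :=
    fun k n hk hn => (hRC.2.2.2 k n hk hn).1
  exact Setup.main ⟨N, hN, ν, J, hν0, hpart, hνz, hJ0, hJcard⟩

end KSS
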